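/- arXiv:1310.6550 — 5 statements merged into one kernel-verified Lean document; each statement's English description precedes it below -/
import Mathlib

section
/- For every ε ∈ (0,1), the expected first passage time of the non-adaptive Metropolis chain from state 1 to state 3 satisfies E[T̄₁→₃] = 6/ε + 3; equivalently, (ε/6)·E[T̄₁→₃] = 1 + ε/2, which tends to 1 as ε → 0. -/
open MeasureTheory ProbabilityTheory Filter Real Set Topology

noncomputable section

/-- The state space: index `0` is state "1", index `1` is state "2", index `2` is state "3". -/
abbrev WLState := Fin 3

/-- First passage time of the trajectory `ω` to the state `s`
(with the convention `sInf ∅ = 0`). -/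
def hitTime (s : WLState) (ω : ℕ → WLState) : ℕ := sInf {n : ℕ | ω n = s}

/-- A measure `μ` on trajectory space is the law of the (possibly path-dependent) Markov chain
with initial state `x0` and transition matrix `P x k` at time `k` given the past path `x`,
expressed through its cylinder probabilities. -/
def IsChainLaw (P : (ℕ → WLState) → ℕ → WLState → WLState → ℝ) (x0 : WLState)
    (μ : Measure (ℕ → WLState)) : Prop :=
  ∀ (n : ℕ) (x : ℕ → WLState),
    μ {ω : ℕ → WLState | ∀ k ≤ n, ω k = x k} =
      (if x 0 = x0 then (1 : ENNReal) else 0) *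
        ∏ k ∈ Finset.range n, ENNReal.ofReal (P x k (x k) (x (k + 1)))

/-- Transition matrix of the non-adaptive Metropolis chain: rows
`(1-ε/3, ε/3, 0)`, `(1/3, 1/3, 1/3)`, `(0, ε/3, 1-ε/3)`. -/
def Pbar (ε : ℝ) : WLState → WLState → ℝ :=
  ![![1 - ε / 3, ε / 3, 0], ![1 / 3, 1 / 3, 1 / 3], ![0, ε / 3, 1 - ε / 3]]

/-!
Let `q_n(i)` be the probability that the chain has stayed off state 3 up to time `n` and sits at
`i` at time `n`. These taboo probabilities evolve by `P̄` with state 3 deleted, and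
`P(T̄ > n) = q_n(1) + q_n(2)`. The vector `h = (h(1), h(2)) = (6/ε + 3, 3/ε + 3)` solves the
first-step equations `h = 1 + Q h` of that killed chain, so `V_n = ⟨q_n, h⟩` telescopes:
`V_n = P(T̄ > n) + V_{n+1}`. Since also `P(T̄ > n) ≥ V_n / h(1)`, `V_n → 0`, the chain reaches 3
almost surely (so the convention `sInf ∅ = 0` in `hitTime` is harmless), and
`E[T̄] = ∑ₙ P(T̄ > n) = V_0 = h(1) = 6/ε + 3`.
-/

open Finset
open scoped ENNReal

section PathSpace

variable {α : Type*}

def pathPrefix (n : ℕ) (ω : ℕ → α) : Fin (n + 1) → α := fun k => ω k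

theorem measurable_pathPrefix [MeasurableSpace α] (n : ℕ) : Measurable (pathPrefix (α := α) n) :=
  measurable_pi_lambda _ fun k => measurable_pi_apply (k : ℕ)

theorem preimage_pathPrefix_singleton (n : ℕ) (x : ℕ → α) :
    pathPrefix n ⁻¹' {pathPrefix n x} = {ω | ∀ k ≤ n, ω k = x k} := by
  ext ω
  simp only [Set.mem_preimage, Set.mem_singleton_iff, Set.mem_ofPred_eq, funext_iff, pathPrefix,
    Fin.forall_iff, Nat.lt_succ_iff]

theorem measure_preimage_pathPrefix [MeasurableSpace α] [MeasurableSingletonClass α]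
    (μ : Measure (ℕ → α)) (n : ℕ) (V : Finset (Fin (n + 1) → α)) :
    μ (pathPrefix n ⁻¹' V) = ∑ v ∈ V, μ (pathPrefix n ⁻¹' {v}) :=
  (sum_measure_preimage_singleton V fun v _ =>
    measurable_pathPrefix n (measurableSet_singleton v)).symm

theorem measure_eq_sum_measure_inter_eval [Fintype α] [MeasurableSpace α]
    [MeasurableSingletonClass α] (μ : Measure (ℕ → α)) (A : Set (ℕ → α)) (n : ℕ) :
    μ A = ∑ i, μ (A ∩ {ω | ω n = i}) := by
  have hfiber (i : α) : MeasurableSet {ω : ℕ → α | ω n = i} :=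
    (measurableSet_singleton i).preimage (measurable_pi_apply n)
  have := sum_measure_preimage_singleton (μ := μ.restrict A) univ
    (f := fun ω : ℕ → α => ω n) fun i _ => hfiber i
  simp only [coe_univ, Set.preimage_univ, Measure.restrict_apply_univ] at this
  rw [← this]
  refine sum_congr rfl fun i _ => ?_
  rw [Set.inter_comm]
  exact Measure.restrict_apply (hfiber i)

end PathSpace

theorem lintegral_natCast_eq_tsum_measure_lt {Ω : Type*} [MeasurableSpace Ω] (μ : Measure Ω)
    {f : Ω → ℕ} (hf : ∀ n, NullMeasurableSet {ω | n < f ω} μ) :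
    ∫⁻ ω, (f ω : ℝ≥0∞) ∂μ = ∑' n, μ {ω | n < f ω} := by
  have hpt (ω : Ω) : (f ω : ℝ≥0∞) = ∑' n, {ω | n < f ω}.indicator 1 ω := by
    rw [tsum_eq_sum (s := range (f ω)) fun n hn => by simpa using hn]
    simp [Set.indicator_apply, filter_true_of_mem fun n hn => mem_range.1 hn]
  simp_rw [hpt]
  rw [lintegral_tsum (f := fun n => {ω | n < f ω}.indicator 1) fun n =>
    aemeasurable_one.indicator₀ (hf n)]
  exact tsum_congr fun n => lintegral_indicator_one₀ (hf n)

theorem hasSum_of_eq_add_succ {m V : ℕ → ℝ} {c : ℝ} (hc : 0 < c) (hV : ∀ n, 0 ≤ V n)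
    (hm : ∀ n, c * V n ≤ m n) (hstep : ∀ n, V n = m n + V (n + 1)) : HasSum m (V 0) := by
  have hm0 (n : ℕ) : 0 ≤ m n := (mul_nonneg hc.le (hV n)).trans (hm n)
  have hpartial (N : ℕ) : ∑ n ∈ range N, m n = V 0 - V N := by
    rw [← sum_range_sub']
    exact sum_congr rfl fun n _ => by linarith [hstep n]
  have hsum : Summable m :=
    summable_of_sum_range_le (c := V 0) hm0 fun N => by linarith [hpartial N, hV N]
  have hVlim : Tendsto V atTop (𝓝 0) :=
    squeeze_zero hV (fun n => (le_div_iff₀' hc).2 (hm n))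
      (by simpa using hsum.tendsto_atTop_zero.div_const c)
  rw [hasSum_iff_tendsto_nat_of_nonneg hm0]
  simpa [hpartial] using (tendsto_const_nhds (x := V 0)).sub hVlim

theorem ae_exists_eq_of_tendsto_measure_avoid {α : Type*} [MeasurableSpace α]
    {μ : Measure (ℕ → α)} [IsFiniteMeasure μ] {s : α}
    (h : Tendsto (fun n => (μ {ω | ∀ k ≤ n, ω k ≠ s}).toReal) atTop (𝓝 0)) :
    ∀ᵐ ω ∂μ, ∃ m, ω m = s := by
  have hle (n : ℕ) : (μ {ω | ∀ m, ω m ≠ s}).toReal ≤ (μ {ω | ∀ k ≤ n, ω k ≠ s}).toReal :=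
    ENNReal.toReal_mono (measure_ne_top _ _) (measure_mono fun ω hω k _ => hω k)
  have hnull : (μ {ω | ∀ m, ω m ≠ s}).toReal = 0 :=
    le_antisymm (ge_of_tendsto' h hle) ENNReal.toReal_nonneg
  simpa [ae_iff, ENNReal.toReal_eq_zero_iff, measure_ne_top] using hnull

theorem lt_hitTime_iff {s : WLState} {ω : ℕ → WLState} (hω : ∃ m, ω m = s) (n : ℕ) :
    n < hitTime s ω ↔ ∀ k ≤ n, ω k ≠ s := by
  refine ⟨fun h k hk hks => ?_, fun h => ?_⟩
  · have : hitTime s ω ≤ k := Nat.sInf_le hks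
    omega
  · by_contra hle
    exact h _ (not_lt.1 hle) (Nat.sInf_mem hω)

theorem lintegral_hitTime_eq_tsum {μ : Measure (ℕ → WLState)} {s : WLState}
    (hs : ∀ᵐ ω ∂μ, ∃ m, ω m = s) :
    ∫⁻ ω, (hitTime s ω : ℝ≥0∞) ∂μ = ∑' n, μ {ω | ∀ k ≤ n, ω k ≠ s} := by
  have hae (n : ℕ) : {ω | n < hitTime s ω} =ᵐ[μ] {ω | ∀ k ≤ n, ω k ≠ s} :=
    eventuallyEq_set.2 (hs.mono fun ω hω => lt_hitTime_iff hω n)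
  have hmeas (n : ℕ) : MeasurableSet {ω : ℕ → WLState | ∀ k ≤ n, ω k ≠ s} := by
    simp only [Set.ofPred_forall]
    exact .iInter fun k => .iInter fun _ =>
      (measurableSet_singleton s).compl.preimage (measurable_pi_apply k)
  rw [lintegral_natCast_eq_tsum_measure_lt μ fun n =>
    (hmeas n).nullMeasurableSet.congr (hae n).symm]
  exact tsum_congr fun n => measure_congr (hae n)

def tabooMass (μ : Measure (ℕ → WLState)) (s : WLState) (n : ℕ) (j : WLState) : ℝ≥0∞ :=
  μ ({ω | ∀ k ≤ n, ω k ≠ s} ∩ {ω | ω n = j})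

theorem tabooMass_self (μ : Measure (ℕ → WLState)) (s : WLState) (n : ℕ) :
    tabooMass μ s n s = 0 := by
  have hempty : {ω : ℕ → WLState | ∀ k ≤ n, ω k ≠ s} ∩ {ω | ω n = s} = ∅ := by
    ext ω
    simp +contextual
  rw [tabooMass, hempty, measure_empty]

theorem measure_avoid_eq_sum_tabooMass (μ : Measure (ℕ → WLState)) (s : WLState) (n : ℕ) :
    μ {ω | ∀ k ≤ n, ω k ≠ s} = ∑ j, tabooMass μ s n j :=
  measure_eq_sum_measure_inter_eval μ _ n

namespace IsChainLaw

variable {P : WLState → WLState → ℝ} {x0 : WLState} {μ : Measure (ℕ → WLState)}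

theorem measure_cylinder_inter_eval_succ (hμ : IsChainLaw (fun _ _ => P) x0 μ) (n : ℕ)
    (v : Fin (n + 1) → WLState) (j : WLState) :
    μ (pathPrefix n ⁻¹' {v} ∩ {ω | ω (n + 1) = j}) =
      μ (pathPrefix n ⁻¹' {v}) * ENNReal.ofReal (P (v (Fin.last n)) j) := by
  set x : ℕ → WLState := fun k => if h : k < n + 1 then v ⟨k, h⟩ else j
  have hv : pathPrefix n x = v := funext fun k => dif_pos k.2
  have hxn : x n = v (Fin.last n) := dif_pos n.lt_succ_self
  have hxj : x (n + 1) = j := dif_neg (lt_irrefl _)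
  have hsucc : {ω : ℕ → WLState | ∀ k ≤ n, ω k = x k} ∩ {ω | ω (n + 1) = x (n + 1)} =
      {ω | ∀ k ≤ n + 1, ω k = x k} := by
    ext ω
    simp only [Set.mem_inter_iff, Set.mem_ofPred_eq, Nat.le_succ_iff, or_imp, forall_and,
      forall_eq]
  rw [← hv, ← hxj, preimage_pathPrefix_singleton, hsucc, hμ, hμ, prod_range_succ, mul_assoc,
    hv, hxn]

theorem measure_preimage_inter_eval_succ (hμ : IsChainLaw (fun _ _ => P) x0 μ) {n : ℕ}
    {V : Finset (Fin (n + 1) → WLState)} {i : WLState} (hV : ∀ v ∈ V, v (Fin.last n) = i)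
    (j : WLState) :
    μ (pathPrefix n ⁻¹' V ∩ {ω | ω (n + 1) = j}) =
      μ (pathPrefix n ⁻¹' V) * ENNReal.ofReal (P i j) := by
  have hj : MeasurableSet {ω : ℕ → WLState | ω (n + 1) = j} :=
    (measurableSet_singleton j).preimage (measurable_pi_apply (n + 1))
  rw [← Measure.restrict_apply' hj, measure_preimage_pathPrefix, measure_preimage_pathPrefix,
    sum_mul]
  refine sum_congr rfl fun v hv => ?_
  rw [Measure.restrict_apply' hj, hμ.measure_cylinder_inter_eval_succ, hV v hv]

theorem tabooMass_zero (hμ : IsChainLaw (fun _ _ => P) x0 μ) {s : WLState} (hx0 : x0 ≠ s)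
    (j : WLState) : tabooMass μ s 0 j = if j = x0 then 1 else 0 := by
  by_cases hjs : j = s
  · have hempty : {ω : ℕ → WLState | ∀ k ≤ 0, ω k ≠ s} ∩ {ω | ω 0 = j} = ∅ := by
      ext ω
      simp [hjs]
    rw [tabooMass, hempty, measure_empty, if_neg (hjs ▸ hx0.symm)]
  · have hset : {ω : ℕ → WLState | ∀ k ≤ 0, ω k ≠ s} ∩ {ω | ω 0 = j} =
        {ω | ∀ k ≤ 0, ω k = (fun _ => j) k} := by
      ext ω
      simp +contextual [hjs]
    rw [tabooMass, hset]
    simpa using hμ 0 fun _ => j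

theorem tabooMass_succ (hμ : IsChainLaw (fun _ _ => P) x0 μ) (s : WLState) (n : ℕ)
    {j : WLState} (hjs : j ≠ s) :
    tabooMass μ s (n + 1) j = ∑ i, tabooMass μ s n i * ENNReal.ofReal (P i j) := by
  have hset : {ω : ℕ → WLState | ∀ k ≤ n + 1, ω k ≠ s} ∩ {ω | ω (n + 1) = j} =
      {ω | ∀ k ≤ n, ω k ≠ s} ∩ {ω | ω (n + 1) = j} := by
    ext ω
    simp +contextual [Nat.le_succ_iff, or_imp, forall_and, hjs]
  have hprefix (i : WLState) : {ω : ℕ → WLState | ∀ k ≤ n, ω k ≠ s} ∩ {ω | ω n = i} =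
      pathPrefix n ⁻¹' ↑(univ.filter fun v : Fin (n + 1) → WLState =>
        (∀ k, v k ≠ s) ∧ v (Fin.last n) = i) := by
    ext ω
    simp [pathPrefix, Fin.forall_iff]
  rw [tabooMass, hset, measure_eq_sum_measure_inter_eval _ _ n]
  refine sum_congr rfl fun i _ => ?_
  rw [Set.inter_right_comm, tabooMass, hprefix,
    hμ.measure_preimage_inter_eval_succ fun v hv => (mem_filter.1 hv).2.2]

theorem toReal_tabooMass_succ [IsFiniteMeasure μ] (hμ : IsChainLaw (fun _ _ => P) x0 μ)
    (hP : ∀ i j, 0 ≤ P i j) (s : WLState) (n : ℕ) {j : WLState} (hjs : j ≠ s) :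
    (tabooMass μ s (n + 1) j).toReal = ∑ i, (tabooMass μ s n i).toReal * P i j := by
  rw [hμ.tabooMass_succ s n hjs,
    ENNReal.toReal_sum (f := fun i => tabooMass μ s n i * ENNReal.ofReal (P i j))
      fun i _ => ENNReal.mul_ne_top (measure_ne_top _ _) ENNReal.ofReal_ne_top]
  exact sum_congr rfl fun i _ => by rw [ENNReal.toReal_mul, ENNReal.toReal_ofReal (hP i j)]

end IsChainLaw

theorem Pbar_nonneg {ε : ℝ} (hε0 : 0 ≤ ε) (hε3 : ε ≤ 3) (i j : WLState) : 0 ≤ Pbar ε i j := by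
  fin_cases i <;> fin_cases j <;> simp [Pbar] <;> linarith

theorem IsChainLaw.hasSum_survival_Pbar {ε : ℝ} (hε0 : 0 < ε) (hε3 : ε ≤ 3)
    {μ : Measure (ℕ → WLState)} [IsFiniteMeasure μ] (hμ : IsChainLaw (fun _ _ => Pbar ε) 0 μ) :
    HasSum (fun n => (μ {ω | ∀ k ≤ n, ω k ≠ 2}).toReal) (6 / ε + 3) := by
  set a : ℕ → ℝ := fun n => (tabooMass μ 2 n 0).toReal
  set b : ℕ → ℝ := fun n => (tabooMass μ 2 n 1).toReal
  have hzero := tabooMass_self μ 2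
  have hsurvival (n : ℕ) : (μ {ω | ∀ k ≤ n, ω k ≠ 2}).toReal = a n + b n := by
    rw [measure_avoid_eq_sum_tabooMass, Fin.sum_univ_three, hzero, add_zero]
    exact ENNReal.toReal_add (measure_ne_top μ _) (measure_ne_top μ _)
  have hP := Pbar_nonneg hε0.le hε3
  have ha (n : ℕ) : a (n + 1) = (1 - ε / 3) * a n + 1 / 3 * b n := by
    simp only [a, b, hμ.toReal_tabooMass_succ hP 2 n (by decide : (0 : WLState) ≠ 2),
      Fin.sum_univ_three, hzero, ENNReal.toReal_zero, zero_mul, add_zero, Pbar,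
      Matrix.cons_val', Matrix.cons_val_zero, Matrix.cons_val_one, Matrix.cons_val_fin_one,
      Matrix.cons_val]
    ring
  have hb (n : ℕ) : b (n + 1) = ε / 3 * a n + 1 / 3 * b n := by
    simp only [a, b, hμ.toReal_tabooMass_succ hP 2 n (by decide : (1 : WLState) ≠ 2),
      Fin.sum_univ_three, hzero, ENNReal.toReal_zero, zero_mul, add_zero, Pbar,
      Matrix.cons_val', Matrix.cons_val_zero, Matrix.cons_val_one, Matrix.cons_val_fin_one,
      Matrix.cons_val]
    ring
  have ha0 : a 0 = 1 := by simp [a, hμ.tabooMass_zero (by decide : (0 : WLState) ≠ 2)]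
  have hb0 : b 0 = 0 := by simp [b, hμ.tabooMass_zero (by decide : (0 : WLState) ≠ 2)]
  have hpos (n : ℕ) : 0 ≤ a n ∧ 0 ≤ b n := ⟨ENNReal.toReal_nonneg, ENNReal.toReal_nonneg⟩
  set V : ℕ → ℝ := fun n => (6 / ε + 3) * a n + (3 / ε + 3) * b n
  have hsum := hasSum_of_eq_add_succ (m := fun n => (μ {ω | ∀ k ≤ n, ω k ≠ 2}).toReal) (V := V)
    (c := (6 / ε + 3)⁻¹) (by positivity)
    (fun n => by have := hpos n; positivity)
    (fun n => by
      rw [hsurvival, inv_mul_le_iff₀ (by positivity)]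
      have hgap : (6 / ε + 3) * (a n + b n) - V n = 3 / ε * b n := by ring
      have := mul_nonneg (div_pos three_pos hε0).le (hpos n).2
      linarith)
    (fun n => by
      rw [hsurvival]
      dsimp only [V]
      rw [ha, hb]
      field_simp
      ring)
  simpa [V, ha0, hb0] using hsum

/-- For every `ε ∈ (0,1)`, the expected first passage time of the non-adaptive
Metropolis chain from state 1 to state 3 satisfies `E[T̄₁→₃] = 6/ε + 3`; equivalently,
`(ε/6)·E[T̄₁→₃] = 1 + ε/2`. -/
theorem stmt0 (ε : ℝ) (hε : ε ∈ Set.Ioo (0 : ℝ) 1)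
    (μ : Measure (ℕ → WLState)) [IsProbabilityMeasure μ]
    (hμ : IsChainLaw (fun _ _ => Pbar ε) 0 μ) :
    (∫⁻ ω, (hitTime 2 ω : ENNReal) ∂μ) = ENNReal.ofReal (6 / ε + 3) ∧
      ε / 6 * (∫⁻ ω, (hitTime 2 ω : ENNReal) ∂μ).toReal = 1 + ε / 2 := by
  obtain ⟨hε0, hε1⟩ := hε
  have hsum := hμ.hasSum_survival_Pbar hε0 (by linarith)
  have hE : ∫⁻ ω, (hitTime 2 ω : ℝ≥0∞) ∂μ = ENNReal.ofReal (6 / ε + 3) := by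
    rw [lintegral_hitTime_eq_tsum (ae_exists_eq_of_tendsto_measure_avoid
      hsum.summable.tendsto_atTop_zero), ← hsum.tsum_eq,
      ENNReal.ofReal_tsum_of_nonneg (fun n => ENNReal.toReal_nonneg) hsum.summable]
    exact tsum_congr fun n => (ENNReal.ofReal_toReal (measure_ne_top _ _)).symm
  refine ⟨hE, ?_⟩
  rw [hE, ENNReal.toReal_ofReal (add_pos (div_pos (by norm_num) hε0) three_pos).le]
  field_simp
  ring
end
end

section
/- For α ∈ (0,1), ln(Ξₙ) is asymptotically equivalent to (γ⋆/(1−α))·n^{1−α} as n → ∞, i.e. lim_{n→∞} ln(Ξₙ) / ((γ⋆/(1−α))·n^{1−α}) = 1. -/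
/-!
Taking logarithms, `log Ξₙ = ∑_{k ≤ n} log (1 + γ⋆ k^{-α})`. Since `γₖ → 0`, each summand is
equivalent to `γ⋆ k^{-α}`, which in turn is equivalent to the telescoping increment
`γ⋆/(1-α) · (k^{1-α} - (k-1)^{1-α})` (derivative of `t ↦ (1 - t)^{1-α}` at `0`). These increments
are nonnegative with divergent partial sums `γ⋆/(1-α) · n^{1-α}`, and asymptotic equivalence
passes to partial sums of such series.
-/

open Filter Real Topology

noncomputable section

/-- `Ξₙ = ∏_{k=1}^n (1 + γₖ)` with `γₖ = γ⋆ k^(-α)` and the convention `Ξ₀ = 1`. -/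
def Xi (γs α : ℝ) (n : ℕ) : ℝ := ∏ k ∈ Finset.Icc 1 n, (1 + γs * (k : ℝ) ^ (-α))

open Asymptotics Finset

theorem Asymptotics.IsEquivalent.sum_range {f g : ℕ → ℝ} (h : f ~[atTop] g) (hg : 0 ≤ g)
    (h'g : Tendsto (fun n => ∑ i ∈ range n, g i) atTop atTop) :
    (fun n => ∑ i ∈ range n, f i) ~[atTop] fun n => ∑ i ∈ range n, g i := by
  have := h.isLittleO.sum_range hg h'g
  simp only [Pi.sub_apply, sum_sub_distrib] at this
  exact this

theorem HasDerivAt.isEquivalent_sub {𝕜 : Type*} [NontriviallyNormedField 𝕜] {f : 𝕜 → 𝕜}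
    {f' x : 𝕜} (hf : HasDerivAt f f' x) (hf' : f' ≠ 0) :
    (fun t => f t - f x) ~[𝓝 x] fun t => (t - x) * f' :=
  hf.isLittleO.trans_isBigO <| (isBigO_self_const_mul hf' _ _).congr_right fun _ => mul_comm _ _

theorem isEquivalent_log_one_add {ι : Type*} {l : Filter ι} {u : ι → ℝ}
    (hu : Tendsto u l (𝓝 0)) : (fun i => log (1 + u i)) ~[l] u := by
  have hderiv : HasDerivAt (fun t : ℝ => log (1 + t)) 1 0 := by
    simpa using ((hasDerivAt_id (0 : ℝ)).const_add 1).log (by norm_num)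
  have := (hderiv.isEquivalent_sub one_ne_zero).comp_tendsto hu
  simp only [add_zero, log_one, sub_zero, mul_one] at this
  exact this

theorem isEquivalent_rpow_sub_rpow_sub_one {p : ℝ} (hp : p ≠ 0) :
    (fun x : ℝ => x ^ p - (x - 1) ^ p) ~[atTop] fun x => p * x ^ (p - 1) := by
  have hderiv : HasDerivAt (fun t : ℝ => (1 - t) ^ p) (-p) 0 := by
    simpa using ((hasDerivAt_id (0 : ℝ)).const_sub 1).rpow_const (p := p) (by norm_num)
  have hnear := (hderiv.isEquivalent_sub (neg_ne_zero.mpr hp)).neg.comp_tendsto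
    tendsto_inv_atTop_zero
  refine (((IsEquivalent.refl (u := fun x : ℝ => x ^ p)).mul hnear).congr_left ?_).congr_right ?_
  · filter_upwards [eventually_ge_atTop 1] with x hx
    have hx0 : 0 < x := by linarith
    have : x * (1 - x⁻¹) = x - 1 := by field_simp
    simp only [Function.comp_apply, Pi.mul_apply, sub_zero, one_rpow]
    rw [mul_neg, mul_sub, ← mul_rpow hx0.le (by simp [inv_le_one_of_one_le₀ hx]), this]
    ring
  · filter_upwards [eventually_gt_atTop 0] with x hx
    simp only [Function.comp_apply, Pi.mul_apply, rpow_sub_one hx.ne']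
    ring

theorem sum_range_rpow_succ_sub_rpow {p : ℝ} (hp : p ≠ 0) (n : ℕ) :
    ∑ i ∈ range n, (((i : ℝ) + 1) ^ p - (i : ℝ) ^ p) = (n : ℝ) ^ p := by
  simpa [zero_rpow hp] using sum_range_sub (fun i : ℕ => (i : ℝ) ^ p) n

theorem isEquivalent_mul_rpow_neg (γ : ℝ) {α : ℝ} (hα : α ≠ 1) :
    (fun x : ℝ => γ * x ^ (-α)) ~[atTop]
      fun x => γ / (1 - α) * (x ^ (1 - α) - (x - 1) ^ (1 - α)) := by
  refine (IsEquivalent.refl.mul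
    (isEquivalent_rpow_sub_rpow_sub_one (sub_ne_zero.mpr hα.symm)).symm).congr_left ?_
  filter_upwards with x
  simp only [Pi.mul_apply, show 1 - α - 1 = -α by ring]
  field_simp

theorem isEquivalent_log_one_add_mul_rpow_neg (γ : ℝ) {α : ℝ} (hα : 0 < α) (hα1 : α ≠ 1) :
    (fun i : ℕ => log (1 + γ * ((i : ℝ) + 1) ^ (-α))) ~[atTop]
      fun i => γ / (1 - α) * (((i : ℝ) + 1) ^ (1 - α) - (i : ℝ) ^ (1 - α)) := by
  have hshift : Tendsto (fun i : ℕ => (i : ℝ) + 1) atTop atTop :=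
    tendsto_atTop_add_const_right _ 1 tendsto_natCast_atTop_atTop
  have hsmall : Tendsto (fun i : ℕ => γ * ((i : ℝ) + 1) ^ (-α)) atTop (𝓝 0) := by
    simpa using ((tendsto_rpow_neg_atTop hα).comp hshift).const_mul γ
  refine ((isEquivalent_log_one_add hsmall).trans
    ((isEquivalent_mul_rpow_neg γ hα1).comp_tendsto hshift)).congr_right ?_
  filter_upwards with i
  simp

theorem log_Xi_eq_sum {γs : ℝ} (hγs : 0 ≤ γs) (α : ℝ) (n : ℕ) :
    log (Xi γs α n) = ∑ i ∈ range n, log (1 + γs * ((i : ℝ) + 1) ^ (-α)) := by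
  rw [Xi, log_prod, ← Ico_add_one_right_eq_Icc, sum_Ico_eq_sum_range]
  · simp [add_comm]
  · exact fun _ _ => by positivity

/-- For `α ∈ (0,1)`, `ln(Ξₙ) ~ (γ⋆/(1−α))·n^{1−α}` as `n → ∞`. -/
theorem stmt12 (γs α : ℝ) (hγs : 0 < γs) (hα : 0 < α) (hα1 : α < 1) :
    Tendsto (fun n : ℕ => Real.log (Xi γs α n) / (γs / (1 - α) * (n : ℝ) ^ (1 - α)))
      atTop (𝓝 1) := by
  have hL : 0 < γs / (1 - α) := div_pos hγs (by linarith)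
  have htelescope (n : ℕ) :
      ∑ i ∈ range n, γs / (1 - α) * (((i : ℝ) + 1) ^ (1 - α) - (i : ℝ) ^ (1 - α)) =
        γs / (1 - α) * (n : ℝ) ^ (1 - α) := by
    rw [← mul_sum, sum_range_rpow_succ_sub_rpow (by linarith)]
  have hincrement_nonneg (i : ℕ) :
      0 ≤ γs / (1 - α) * (((i : ℝ) + 1) ^ (1 - α) - (i : ℝ) ^ (1 - α)) :=
    mul_nonneg hL.le (sub_nonneg.mpr (by gcongr; linarith))
  have hgrowth : Tendsto (fun n : ℕ => γs / (1 - α) * (n : ℝ) ^ (1 - α)) atTop atTop :=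
    ((tendsto_rpow_atTop (by linarith)).comp tendsto_natCast_atTop_atTop).const_mul_atTop hL
  have hequiv := (isEquivalent_log_one_add_mul_rpow_neg γs hα hα1.ne).sum_range
    hincrement_nonneg (by simpa only [htelescope] using hgrowth)
  simp only [htelescope, ← log_Xi_eq_sum hγs.le] at hequiv
  refine (isEquivalent_iff_tendsto_one ?_).mp hequiv
  filter_upwards [eventually_gt_atTop 0] with n hn
  positivity
end
end

section
/- For α = 1/2, there exists a constant C > 0 such that for every integer n ≥ 1, Ξₙ ≥ C·exp( 2γ⋆·√n − (γ⋆²/2)·ln n ). -/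
/-!
Since `log (1 + x) ≥ x - x² / 2` for `x ≥ 0`, `log Ξₙ ≥ ∑ (γₖ - γₖ² / 2)`, which for `α = 1/2` is
`γ⋆ ∑ k^(-1/2) - (γ⋆² / 2) ∑ k⁻¹`. By telescoping and the harmonic bound, `∑_{k ≤ n} k^(-1/2) ≥ 2√(n+1) - 2`
and `∑_{k ≤ n} k⁻¹ ≤ 1 + log n`, which leaves the constant `C = exp (-(2γ⋆ + γ⋆² / 2))`.
-/

open Filter Real Topology

noncomputable section

lemma sub_sq_div_two_le_log_one_add {x : ℝ} (hx : 0 ≤ x) : x - x ^ 2 / 2 ≤ log (1 + x) :=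
  calc x - x ^ 2 / 2 ≤ 2 * x / (x + 2) := by
        rw [le_div_iff₀ (by linarith)]
        nlinarith [pow_nonneg hx 3]
    _ ≤ log (1 + x) := le_log_one_add_of_nonneg hx

lemma exp_sub_sq_div_two_le_one_add {x : ℝ} (hx : 0 ≤ x) : exp (x - x ^ 2 / 2) ≤ 1 + x := by
  rw [← exp_log (by linarith : 0 < 1 + x)]
  exact exp_le_exp.mpr (sub_sq_div_two_le_log_one_add hx)

lemma exp_sum_sub_sq_div_two_le_prod_one_add {ι : Type*} (s : Finset ι) {x : ι → ℝ}
    (hx : ∀ i ∈ s, 0 ≤ x i) :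
    exp (∑ i ∈ s, (x i - x i ^ 2 / 2)) ≤ ∏ i ∈ s, (1 + x i) := by
  rw [exp_sum]
  exact Finset.prod_le_prod (fun _ _ ↦ (exp_pos _).le)
    fun i hi ↦ exp_sub_sq_div_two_le_one_add (hx i hi)

lemma two_mul_sqrt_add_one_sub_two_le_sum_inv_sqrt (n : ℕ) :
    2 * √(n + 1) - 2 ≤ ∑ k ∈ Finset.Icc 1 n, (√k)⁻¹ := by
  induction n with
  | zero => simp
  | succ n ih =>
    rw [Finset.sum_Icc_succ_top (by omega)]
    push_cast
    have hpos : 0 < √((n : ℝ) + 1) := by positivity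
    have hsq : √((n : ℝ) + 1) ^ 2 = n + 1 := sq_sqrt (by positivity)
    have hsq' : √((n : ℝ) + 1 + 1) ^ 2 = n + 1 + 1 := sq_sqrt (by positivity)
    -- `2 (√(m+1) - √m) = 2 / (√(m+1) + √m) ≤ 1 / √m`
    have hstep : 2 * √((n : ℝ) + 1 + 1) - 2 * √((n : ℝ) + 1) ≤ (√((n : ℝ) + 1))⁻¹ := by
      rw [inv_eq_one_div, le_div_iff₀ hpos]
      nlinarith [sq_nonneg (√((n : ℝ) + 1 + 1) - √((n : ℝ) + 1))]
    linarith

lemma sum_Icc_inv_le_one_add_log (n : ℕ) :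
    ∑ k ∈ Finset.Icc 1 n, (k : ℝ)⁻¹ ≤ 1 + log n := by
  simpa [harmonic_eq_sum_Icc] using harmonic_le_one_add_log n

lemma exp_sum_sub_sq_div_two_le_Xi {γs : ℝ} (hγs : 0 ≤ γs) (α : ℝ) (n : ℕ) :
    exp (∑ k ∈ Finset.Icc 1 n, (γs * (k : ℝ) ^ (-α) - (γs * (k : ℝ) ^ (-α)) ^ 2 / 2))
      ≤ Xi γs α n :=
  exp_sum_sub_sq_div_two_le_prod_one_add _ fun _ _ ↦ by positivity

lemma exp_sum_inv_sqrt_sub_sum_inv_le_Xi_half {γs : ℝ} (hγs : 0 ≤ γs) (n : ℕ) :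
    exp (γs * ∑ k ∈ Finset.Icc 1 n, (√k)⁻¹ - γs ^ 2 / 2 * ∑ k ∈ Finset.Icc 1 n, (k : ℝ)⁻¹)
      ≤ Xi γs (1 / 2) n := by
  convert exp_sum_sub_sq_div_two_le_Xi hγs (1 / 2) n using 2
  rw [Finset.mul_sum, Finset.mul_sum, ← Finset.sum_sub_distrib]
  refine Finset.sum_congr rfl fun k _ ↦ ?_
  rw [rpow_neg (Nat.cast_nonneg k), ← sqrt_eq_rpow, mul_pow, inv_pow, sq_sqrt (Nat.cast_nonneg k)]
  ring

/-- For `α = 1/2`, there is `C > 0` such that for every `n ≥ 1`,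
`Ξₙ ≥ C·exp(2γ⋆·√n − (γ⋆²/2)·ln n)`. -/
theorem stmt15 (γs : ℝ) (hγs : 0 < γs) :
    ∃ C : ℝ, 0 < C ∧ ∀ n : ℕ, 1 ≤ n →
      C * Real.exp (2 * γs * Real.sqrt n - γs ^ 2 / 2 * Real.log n) ≤ Xi γs (1 / 2) n := by
  refine ⟨exp (-(2 * γs + γs ^ 2 / 2)), exp_pos _, fun n _ ↦ ?_⟩
  rw [← exp_add]
  refine le_trans (exp_le_exp.mpr ?_) (exp_sum_inv_sqrt_sub_sum_inv_le_Xi_half hγs.le n)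
  have hsqrt : γs * (2 * √n - 2) ≤ γs * ∑ k ∈ Finset.Icc 1 n, (√k)⁻¹ := by
    have hsum := two_mul_sqrt_add_one_sub_two_le_sum_inv_sqrt n
    have hmono : √(n : ℝ) ≤ √(n + 1) := sqrt_le_sqrt (by linarith)
    gcongr
    linarith
  have hharm : γs ^ 2 / 2 * ∑ k ∈ Finset.Icc 1 n, (k : ℝ)⁻¹ ≤ γs ^ 2 / 2 * (1 + log n) := by
    gcongr
    exact sum_Icc_inv_le_one_add_log n
  linarith
end
end

section
/- For α ∈ (0,1) and every integer n ≥ 0, Σ_{k=0}^{n} Ξₖ ≤ (1/γ⋆)·(n+1)^{α}·exp( (γ⋆/(1−α))·(n+1)^{1−α} ). -/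
/-!
Since `Ξₖ₊₁ - Ξₖ = γₖ₊₁ Ξₖ` and `γₖ₊₁ ≥ γₙ₊₁` for `k ≤ n`, telescoping gives
`γₙ₊₁ · Σ_{k=0}^{n} Ξₖ ≤ Ξₙ₊₁ - 1 < Ξₙ₊₁`. On the other hand `1 + x ≤ eˣ` gives
`Ξₙ₊₁ ≤ exp(γ⋆ Σ_{k=1}^{n+1} k^{-α})`, and by Bernoulli's inequality the power sum is at most
`(n+1)^{1-α}/(1-α)`.
-/

open Filter Real Topology

noncomputable section

theorem Finset.prod_one_add_le_exp_sum {ι : Type*} (s : Finset ι) {f : ι → ℝ}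
    (hf : ∀ i ∈ s, -1 ≤ f i) : ∏ i ∈ s, (1 + f i) ≤ Real.exp (∑ i ∈ s, f i) := by
  rw [Real.exp_sum]
  refine Finset.prod_le_prod (fun i hi => by linarith [hf i hi]) fun i _ => ?_
  linarith [Real.add_one_le_exp (f i)]

theorem Real.mul_rpow_sub_one_le_rpow_sub_rpow {p x : ℝ} (hp0 : 0 ≤ p) (hp1 : p ≤ 1)
    (hx : 1 ≤ x) : p * x ^ (p - 1) ≤ x ^ p - (x - 1) ^ p := by
  have hx0 : 0 < x := by linarith
  have hs : -1 ≤ -x⁻¹ := neg_le_neg (inv_le_one_of_one_le₀ hx)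
  have hsplit : x - 1 = x * (1 + -x⁻¹) := by field_simp; ring
  have hbern := rpow_one_add_le_one_add_mul_self hs hp0 hp1
  calc p * x ^ (p - 1) = x ^ p - x ^ p * (1 + p * -x⁻¹) := by
        rw [Real.rpow_sub_one hx0.ne']; ring
    _ ≤ x ^ p - x ^ p * (1 + -x⁻¹) ^ p := by gcongr
    _ = x ^ p - (x - 1) ^ p := by
        rw [hsplit, Real.mul_rpow hx0.le (by linarith)]

theorem Real.sum_Icc_rpow_neg_le {α : ℝ} (hα : 0 ≤ α) (hα1 : α < 1) (m : ℕ) :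
    ∑ k ∈ Finset.Icc 1 m, (k : ℝ) ^ (-α) ≤ (m : ℝ) ^ (1 - α) / (1 - α) := by
  have h1α : 0 < 1 - α := by linarith
  induction m with
  | zero => simp [Real.zero_rpow h1α.ne']
  | succ m ih =>
    rw [Finset.sum_Icc_succ_top (Nat.le_add_left 1 m)]
    have hstep := Real.mul_rpow_sub_one_le_rpow_sub_rpow h1α.le (by linarith)
      (by simp : (1 : ℝ) ≤ ((m + 1 : ℕ) : ℝ))
    rw [sub_sub_cancel_left, Nat.cast_add_one, add_sub_cancel_right] at hstep
    rw [Nat.cast_add_one, le_div_iff₀ h1α, add_mul]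
    linarith [(le_div_iff₀ h1α).mp ih]

section Xi

variable {γs α : ℝ}

@[simp]
theorem Xi_zero : Xi γs α 0 = 1 := by
  simp [Xi]

theorem Xi_succ (n : ℕ) : Xi γs α (n + 1) = Xi γs α n * (1 + γs * ((n : ℝ) + 1) ^ (-α)) := by
  rw [Xi, Xi, Finset.prod_Icc_succ_top (Nat.le_add_left 1 n), Nat.cast_add_one]

theorem Xi_pos (hγs : 0 ≤ γs) (n : ℕ) : 0 < Xi γs α n :=
  Finset.prod_pos fun k _ => by positivity

theorem sum_range_mul_Xi_eq (n : ℕ) :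
    ∑ k ∈ Finset.range n, γs * ((k : ℝ) + 1) ^ (-α) * Xi γs α k = Xi γs α n - 1 := by
  have hinc (k : ℕ) : γs * ((k : ℝ) + 1) ^ (-α) * Xi γs α k = Xi γs α (k + 1) - Xi γs α k := by
    rw [Xi_succ]; ring
  simp_rw [hinc]
  rw [Finset.sum_range_sub (Xi γs α), Xi_zero]

theorem Xi_le_exp (hγs : 0 ≤ γs) (hα : 0 ≤ α) (hα1 : α < 1) (n : ℕ) :
    Xi γs α n ≤ Real.exp (γs / (1 - α) * (n : ℝ) ^ (1 - α)) := by
  calc Xi γs α n ≤ Real.exp (∑ k ∈ Finset.Icc 1 n, γs * (k : ℝ) ^ (-α)) :=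
        Finset.prod_one_add_le_exp_sum _ fun k _ => by
          have : 0 ≤ γs * (k : ℝ) ^ (-α) := by positivity
          linarith
    _ ≤ Real.exp (γs / (1 - α) * (n : ℝ) ^ (1 - α)) := by
        rw [Real.exp_le_exp, ← Finset.mul_sum, div_mul_eq_mul_div, mul_div_assoc]
        exact mul_le_mul_of_nonneg_left (Real.sum_Icc_rpow_neg_le hα hα1 n) hγs

theorem mul_sum_range_Xi_le (hγs : 0 ≤ γs) (hα : 0 ≤ α) (n : ℕ) :
    γs * ((n : ℝ) + 1) ^ (-α) * ∑ k ∈ Finset.range (n + 1), Xi γs α k ≤ Xi γs α (n + 1) - 1 := by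
  rw [← sum_range_mul_Xi_eq, Finset.mul_sum]
  refine Finset.sum_le_sum fun k hk => ?_
  have hkn : (k : ℝ) ≤ n := by exact_mod_cast Finset.mem_range_succ_iff.mp hk
  have : ((n : ℝ) + 1) ^ (-α) ≤ ((k : ℝ) + 1) ^ (-α) :=
    Real.rpow_le_rpow_of_nonpos (by positivity) (by linarith) (by linarith)
  gcongr
  exact (Xi_pos hγs k).le

end Xi

/-- For `α ∈ (0,1)` and every `n ≥ 0`,
`Σ_{k=0}^{n} Ξₖ ≤ (1/γ⋆)·(n+1)^{α}·exp((γ⋆/(1−α))·(n+1)^{1−α})`. -/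
theorem stmt16 (γs α : ℝ) (hγs : 0 < γs) (hα : 0 < α) (hα1 : α < 1) (n : ℕ) :
    ∑ k ∈ Finset.range (n + 1), Xi γs α k ≤
      1 / γs * ((n : ℝ) + 1) ^ α * Real.exp (γs / (1 - α) * ((n : ℝ) + 1) ^ (1 - α)) := by
  have hn : (0 : ℝ) < n + 1 := by positivity
  have hXi : Xi γs α (n + 1) ≤ Real.exp (γs / (1 - α) * ((n : ℝ) + 1) ^ (1 - α)) := by
    simpa using Xi_le_exp hγs.le hα.le hα1 (n + 1)
  have hsum := mul_sum_range_Xi_le hγs.le hα.le n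
  have hcoef : 0 < γs * ((n : ℝ) + 1) ^ (-α) := by positivity
  rw [← mul_le_mul_iff_right₀ hcoef]
  calc γs * ((n : ℝ) + 1) ^ (-α) * ∑ k ∈ Finset.range (n + 1), Xi γs α k
      ≤ Real.exp (γs / (1 - α) * ((n : ℝ) + 1) ^ (1 - α)) := by linarith
    _ = γs * ((n : ℝ) + 1) ^ (-α) *
        (1 / γs * ((n : ℝ) + 1) ^ α * Real.exp (γs / (1 - α) * ((n : ℝ) + 1) ^ (1 - α))) := by
        rw [Real.rpow_neg hn.le]
        field_simp
end
end

section
/- Let α ∈ (0,1) and let β : (0,1) → [0,∞) be a function with β(ε) ≤ |ln ε| for all ε ∈ (0,1). Then lim_{ε→0} |ln ε|^{α/(1−α)}·e^{−β(ε)} = 0 if and only if lim_{ε→0} (|ln ε| − β(ε))^{α/(1−α)}·e^{−β(ε)} = 0. -/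
open Filter Real Topology

noncomputable section

/-- For `α ∈ (0,1)` and `β : (0,1) → [0,∞)` with `β(ε) ≤ |ln ε|`,
`lim_{ε→0} |ln ε|^{α/(1−α)}·e^{−β(ε)} = 0` iff
`lim_{ε→0} (|ln ε| − β(ε))^{α/(1−α)}·e^{−β(ε)} = 0`. -/
theorem stmt18 (α : ℝ) (hα : 0 < α) (hα1 : α < 1) (β : ℝ → ℝ)
    (hβ : ∀ ε ∈ Set.Ioo (0 : ℝ) 1, 0 ≤ β ε ∧ β ε ≤ |Real.log ε|) :
    Tendsto (fun ε : ℝ => |Real.log ε| ^ (α / (1 - α)) * Real.exp (-β ε))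
        (𝓝[Set.Ioo (0 : ℝ) 1] 0) (𝓝 0) ↔
      Tendsto (fun ε : ℝ => (|Real.log ε| - β ε) ^ (α / (1 - α)) * Real.exp (-β ε))
        (𝓝[Set.Ioo (0 : ℝ) 1] 0) (𝓝 0) := by
  set p : ℝ := α / (1 - α) with hp_def
  have hp : 0 < p := div_pos hα (by linarith)
  have hmem : ∀ᶠ ε in 𝓝[Set.Ioo (0 : ℝ) 1] 0, ε ∈ Set.Ioo (0 : ℝ) 1 :=
    eventually_mem_nhdsWithin
  constructor
  · intro h
    refine squeeze_zero' ?_ ?_ h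
    · filter_upwards [hmem] with ε hε
      exact mul_nonneg (Real.rpow_nonneg (sub_nonneg.2 (hβ ε hε).2) p) (Real.exp_pos _).le
    · filter_upwards [hmem] with ε hε
      refine mul_le_mul_of_nonneg_right ?_ (Real.exp_pos _).le
      exact Real.rpow_le_rpow (sub_nonneg.2 (hβ ε hε).2)
        (sub_le_self _ (hβ ε hε).1) hp.le
  · intro h
    -- |log ε| → atTop
    have hlog : Tendsto (fun ε : ℝ => |Real.log ε|) (𝓝[Set.Ioo (0 : ℝ) 1] 0) atTop := by
      have h1 : Tendsto Real.log (𝓝[Set.Ioo (0 : ℝ) 1] 0) atBot :=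
        Real.tendsto_log_nhdsGT_zero.mono_left
          (nhdsWithin_mono _ (fun x hx => hx.1))
      exact tendsto_abs_atBot_atTop.comp h1
    have hh : Tendsto (fun ε : ℝ => |Real.log ε| ^ p * Real.exp (-(1/2) * |Real.log ε|))
        (𝓝[Set.Ioo (0 : ℝ) 1] 0) (𝓝 0) :=
      (tendsto_rpow_mul_exp_neg_mul_atTop_nhds_zero p (1/2) (by norm_num)).comp hlog
    have hg : Tendsto (fun ε : ℝ =>
        (2:ℝ) ^ p * ((|Real.log ε| - β ε) ^ p * Real.exp (-β ε)) +
        |Real.log ε| ^ p * Real.exp (-(1/2) * |Real.log ε|))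
        (𝓝[Set.Ioo (0 : ℝ) 1] 0) (𝓝 0) := by
      have := (h.const_mul ((2:ℝ) ^ p)).add hh
      simpa using this
    refine squeeze_zero' ?_ ?_ hg
    · filter_upwards [hmem] with ε hε
      exact mul_nonneg (Real.rpow_nonneg (abs_nonneg _) p) (Real.exp_pos _).le
    · filter_upwards [hmem] with ε hε
      obtain ⟨hb0, hble⟩ := hβ ε hε
      rcases le_or_gt (β ε) (|Real.log ε| / 2) with hc | hc
      · have h1 : |Real.log ε| ≤ 2 * (|Real.log ε| - β ε) := by linarith
        have h2 : |Real.log ε| ^ p ≤ (2:ℝ) ^ p * (|Real.log ε| - β ε) ^ p := by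
          calc |Real.log ε| ^ p ≤ (2 * (|Real.log ε| - β ε)) ^ p :=
                Real.rpow_le_rpow (abs_nonneg _) h1 hp.le
            _ = (2:ℝ) ^ p * (|Real.log ε| - β ε) ^ p :=
                Real.mul_rpow (by norm_num) (by linarith)
        have h3 : |Real.log ε| ^ p * Real.exp (-β ε) ≤
            (2:ℝ) ^ p * ((|Real.log ε| - β ε) ^ p * Real.exp (-β ε)) := by
          rw [← mul_assoc]
          exact mul_le_mul_of_nonneg_right h2 (Real.exp_pos _).le
        have h4 : 0 ≤ |Real.log ε| ^ p * Real.exp (-(1/2) * |Real.log ε|) :=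
          mul_nonneg (Real.rpow_nonneg (abs_nonneg _) p) (Real.exp_pos _).le
        linarith
      · have h1 : Real.exp (-β ε) ≤ Real.exp (-(1/2) * |Real.log ε|) := by
          apply Real.exp_le_exp.2; linarith
        have h3 : |Real.log ε| ^ p * Real.exp (-β ε) ≤
            |Real.log ε| ^ p * Real.exp (-(1/2) * |Real.log ε|) :=
          mul_le_mul_of_nonneg_left h1 (Real.rpow_nonneg (abs_nonneg _) p)
        have h4 : 0 ≤ (2:ℝ) ^ p * ((|Real.log ε| - β ε) ^ p * Real.exp (-β ε)) :=
          mul_nonneg (Real.rpow_nonneg (by norm_num) p)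
            (mul_nonneg (Real.rpow_nonneg (by linarith) p) (Real.exp_pos _).le)
        linarith
end
end
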